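/- arXiv:1303.1545 — 2 statements merged into one kernel-verified Lean document; each statement's English description precedes it below -/
import Mathlib

section
/- The matrix P = [[3-3t, 2-t],[1-2t, 3-3t]] over ℤ[t] cannot be transformed by invertible row and column operations (i.e., multiplication on left and right by invertible matrices over ℤ[t]) into an upper-triangular matrix whose (1,1)-entry is 1, given that det P = 7t² - 13t + 7 is irreducible over ℤ[t]. -/
open Polynomial Matrix

/-!
Every entry of `P` vanishes under `ℤ[t] → 𝔽₃, t ↦ 2` (they are `-3, 0, -3, -3` at `t = 2`).
Hence so does every entry of `U * P * V`, which therefore cannot be `1`.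
-/

theorem Matrix.apply_mul_mul_eq_zero_of_map_eq_zero {m n p q R S : Type*}
    [Fintype n] [Fintype p] [NonAssocSemiring R] [NonAssocSemiring S] (f : R →+* S)
    (U : Matrix m n R) {P : Matrix n p R} (V : Matrix p q R) (hP : P.map f = 0) (i : m) (j : q) :
    f ((U * P * V) i j) = 0 := by
  change ((U * P * V).map f) i j = 0
  rw [Matrix.map_mul, Matrix.map_mul, hP, Matrix.mul_zero, Matrix.zero_mul, zero_apply]

theorem map_evalTwoModThree_eq_zero :
    (!![3 - 3 * X, 2 - X; 1 - 2 * X, 3 - 3 * X] : Matrix (Fin 2) (Fin 2) ℤ[X]).map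
      (eval₂RingHom (Int.castRingHom (ZMod 3)) 2) = 0 := by
  ext i j
  fin_cases i <;> fin_cases j <;> simp <;> decide

theorem stmt_1_general
    (P : Matrix (Fin 2) (Fin 2) (Polynomial ℤ))
    (hP : P = !![3 - 3 * X, 2 - X; 1 - 2 * X, 3 - 3 * X]) :
    ¬ ∃ U V : Matrix (Fin 2) (Fin 2) (Polynomial ℤ), IsUnit U ∧ IsUnit V ∧
      (U * P * V) 1 0 = 0 ∧ (U * P * V) 0 0 = 1 := by
  rintro ⟨U, V, -, -, -, h00⟩
  have hvanish := Matrix.apply_mul_mul_eq_zero_of_map_eq_zero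
    (eval₂RingHom (Int.castRingHom (ZMod 3)) 2) U V (hP ▸ map_evalTwoModThree_eq_zero) 0 0
  rw [h00, map_one] at hvanish
  exact one_ne_zero hvanish

/-- The matrix `[[3-3t, 2-t],[1-2t, 3-3t]]` over ℤ[t] cannot be transformed by
invertible row and column operations into an upper-triangular matrix whose
(1,1)-entry is 1, given that its determinant `7t² - 13t + 7` is irreducible. -/
theorem stmt_1
    (P : Matrix (Fin 2) (Fin 2) (Polynomial ℤ))
    (hP : P = !![3 - 3 * X, 2 - X; 1 - 2 * X, 3 - 3 * X])
    (hirr : Irreducible ((7 : Polynomial ℤ) * X ^ 2 - 13 * X + 7)) :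
    ¬ ∃ U V : Matrix (Fin 2) (Fin 2) (Polynomial ℤ), IsUnit U ∧ IsUnit V ∧
      (U * P * V) 1 0 = 0 ∧ (U * P * V) 0 0 = 1 :=
  stmt_1_general P hP
end

section
/- Let F be a field and let P be an n×n upper-triangular matrix over F[t] with all diagonal entries nonzero, having diagonal entries d₁, …, dₙ. Then the cokernel of P: F[t]ⁿ → F[t]ⁿ is a torsion F[t]-module whose dimension as an F-vector space equals the sum of deg(dᵢ) for i = 1, …, n. -/
/-!
Over the principal ideal domain `F[t]`, the Smith normal form of an injective endomorphism `f`
of `F[t]ⁿ` identifies its cokernel with `⊕ F[t] ⧸ (aᵢ)`, where `∏ aᵢ` is associated to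
`det f`; hence the cokernel has `F`-dimension `deg (det f)`. For triangular `P` the determinant is
`∏ dᵢ`, and it kills the cokernel because `det P • v = P (adj P v)`.
-/

open Polynomial Matrix

open Module Submodule in
theorem LinearMap.associated_det_prod_smithNormalFormCoeffs {R M ι : Type*} [CommRing R]
    [IsDomain R] [IsPrincipalIdealRing R] [AddCommGroup M] [Module R M] [Fintype ι]
    (b : Basis ι R M) {f : M →ₗ[R] M} (hf : Function.Injective f) :
    Associated (LinearMap.det f)
      (∏ i, smithNormalFormCoeffs b (LinearMap.finrank_range_of_inj hf) i) := by
  classical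
  set h := LinearMap.finrank_range_of_inj hf
  set a := smithNormalFormCoeffs b h
  set b' := smithNormalFormTopBasis b h
  let e := b'.equiv (smithNormalFormBotBasis b h) (Equiv.refl ι)
  have hdiag : Matrix.toLin b' b' (diagonal a) = (LinearMap.range f).subtype ∘ₗ e :=
    b'.ext fun i => by simp [e, a, b', Matrix.toLin_self, diagonal_apply]
  rw [← det_diagonal, ← LinearMap.det_toLin b', hdiag]
  exact LinearMap.associated_det_of_eq_comp ((LinearEquiv.ofInjective f hf).trans e.symm) _ _
    fun x => by simp

open Module Submodule in
theorem LinearMap.finrank_quotient_range_eq_natDegree_det {F M ι : Type*} [Field F]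
    [AddCommGroup M] [Module F[X] M] [Module F M] [IsScalarTower F F[X] M] [Fintype ι]
    (b : Basis ι F[X] M) {f : M →ₗ[F[X]] M} (hf : Function.Injective f) :
    finrank F (M ⧸ LinearMap.range f) = (LinearMap.det f).natDegree := by
  have h := LinearMap.finrank_range_of_inj hf
  have hne := smithNormalFormCoeffs_ne_zero b h
  have : ∀ i, Module.Finite F (F[X] ⧸ Ideal.span {smithNormalFormCoeffs b h i}) :=
    fun i => (AdjoinRoot.powerBasis (hne i)).finite
  rw [finrank_quotient_eq_sum F b h,
    natDegree_eq_of_degree_eq (degree_eq_degree_of_associated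
      (f.associated_det_prod_smithNormalFormCoeffs b hf)),
    natDegree_prod _ _ fun i _ => hne i]
  simp only [finrank_quotient_span_eq_natDegree]

theorem Matrix.isTorsion_quotient_range_mulVecLin {R ι : Type*} [CommRing R] [Fintype ι]
    [DecidableEq ι] (A : Matrix ι ι R) (hA : A.det ∈ nonZeroDivisors R) :
    Module.IsTorsion R ((ι → R) ⧸ LinearMap.range A.mulVecLin) := by
  intro x
  obtain ⟨v, rfl⟩ := Submodule.Quotient.mk_surjective _ x
  refine ⟨⟨A.det, hA⟩, ?_⟩
  rw [Submonoid.smul_def, ← Submodule.Quotient.mk_smul, Submodule.Quotient.mk_eq_zero]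
  exact ⟨A.adjugate *ᵥ v, by simp [mulVec_mulVec, mul_adjugate, smul_mulVec]⟩

/-- For an n×n upper-triangular matrix over F[t] with nonzero diagonal entries,
the cokernel is a torsion F[t]-module whose F-dimension is the sum of the
degrees of the diagonal entries. -/
theorem stmt_4 {F : Type*} [Field F] (n : ℕ)
    (P : Matrix (Fin n) (Fin n) (Polynomial F))
    (htri : ∀ i j : Fin n, j < i → P i j = 0)
    (hdiag : ∀ i : Fin n, P i i ≠ 0) :
    Module.IsTorsion (Polynomial F)
        ((Fin n → Polynomial F) ⧸ LinearMap.range P.mulVecLin) ∧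
      Module.finrank F ((Fin n → Polynomial F) ⧸ LinearMap.range P.mulVecLin) =
        ∑ i : Fin n, (P i i).natDegree := by
  have hdet : P.det = ∏ i, P i i := det_of_isUpperTriangular htri
  have hdet_ne : P.det ≠ 0 := hdet ▸ Finset.prod_ne_zero_iff.mpr fun i _ => hdiag i
  refine ⟨P.isTorsion_quotient_range_mulVecLin (mem_nonZeroDivisors_of_ne_zero hdet_ne), ?_⟩
  rw [P.mulVecLin.finrank_quotient_range_eq_natDegree_det (Pi.basisFun _ _)
    (mulVec_injective_of_det_ne_zero hdet_ne), ← toLin'_apply', LinearMap.det_toLin', hdet,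
    natDegree_prod _ _ fun i _ => hdiag i]
end
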